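/- Let m ≥ 2 and for ξ ∈ ℝ and v ∈ ℝ^{m−1} define the m×m matrix M(ξ,v) = (1/2)[[1, vᵀ],[v, (1+ξ)I_{m−1} − ξ v vᵀ]]. Let w = (w₀, w̄) ∈ ℝ × ℝ^{m−1} with w̄ ≠ 0, and let u = (u₀, ū) ∈ ℝ × ℝ^{m−1} satisfy w̄ᵀū = ‖w̄‖ u₀. Then uᵀ M(−w₀/‖w̄‖, −w̄/‖w̄‖) u = −(1/2)(1 − w₀/‖w̄‖)(u₀² − ‖ū‖²). -/

import Mathlib

/-!
STATEMENT 17: The quadratic form of `M(−w₀/‖w̄‖, −w̄/‖w̄‖)` on vectors `u`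
satisfying `w̄ᵀū = ‖w̄‖u₀` equals `−(1/2)(1 − w₀/‖w̄‖)(u₀² − ‖ū‖²)`.
-/

open Filter Topology Set Matrix
open scoped InnerProductSpace

/-- The matrix `M(ξ, v) = (1/2) [[1, vᵀ], [v, (1+ξ) I − ξ v vᵀ]]`. -/
noncomputable def socMmat (d : ℕ) (ξ : ℝ) (v : EuclideanSpace ℝ (Fin d)) :
    Matrix (Fin (d + 1)) (Fin (d + 1)) ℝ :=
  Matrix.of fun i j =>
    (1 / 2) * (Fin.cases (Fin.cases 1 (fun j' => v j') j)
      (fun i' => Fin.cases (v i')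
        (fun j' => ((1 + ξ) * (if i' = j' then 1 else 0) - ξ * v i' * v j')) j) i)

/-!
Since `⟪v, ū⟫ = -u₀` for `v = -w̄/‖w̄‖`, every term of the quadratic form
`uᵀ M(ξ, v) u = ½ (u₀² + 2u₀⟪v, ū⟫ + (1 + ξ)‖ū‖² - ξ⟪v, ū⟫²)` becomes a multiple of `u₀²` or
`‖ū‖²`, and the form collapses to `-½ (1 + ξ)(u₀² - ‖ū‖²)`.
-/

lemma EuclideanSpace.real_inner_eq_sum {ι : Type*} [Fintype ι] (x y : EuclideanSpace ℝ ι) :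
    ⟪x, y⟫_ℝ = ∑ i, x i * y i := by
  simp [PiLp.inner_apply, mul_comm]

lemma socMmat_mulVec_cons_zero {d : ℕ} (ξ : ℝ) (v u : EuclideanSpace ℝ (Fin d)) (u₀ : ℝ) :
    (socMmat d ξ v *ᵥ Fin.cons u₀ fun j => u j) 0 = (1 / 2) * (u₀ + ⟪v, u⟫_ℝ) := by
  simp only [socMmat, mulVec, dotProduct, Fin.sum_univ_succ, of_apply, Fin.cases_zero,
    Fin.cases_succ, Fin.cons_zero, Fin.cons_succ, EuclideanSpace.real_inner_eq_sum, mul_add,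
    Finset.mul_sum, one_mul, mul_assoc]

lemma socMmat_mulVec_cons_succ {d : ℕ} (ξ : ℝ) (v u : EuclideanSpace ℝ (Fin d)) (u₀ : ℝ)
    (i : Fin d) :
    (socMmat d ξ v *ᵥ Fin.cons u₀ fun j => u j) i.succ
      = (1 / 2) * (v i * u₀ + (1 + ξ) * u i - ξ * v i * ⟪v, u⟫_ℝ) := by
  simp only [socMmat, mulVec, dotProduct, Fin.sum_univ_succ, of_apply, Fin.cases_zero,
    Fin.cases_succ, Fin.cons_zero, Fin.cons_succ, EuclideanSpace.real_inner_eq_sum, mul_sub,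
    sub_mul, mul_ite, ite_mul, mul_one, mul_zero, zero_mul, Finset.sum_sub_distrib,
    Finset.sum_ite_eq, Finset.mem_univ, if_true, Finset.mul_sum, mul_assoc]
  ring

lemma cons_dotProduct_socMmat_mulVec_cons {d : ℕ} (ξ : ℝ) (v u : EuclideanSpace ℝ (Fin d))
    (u₀ : ℝ) :
    (Fin.cons u₀ (fun j => u j) : Fin (d + 1) → ℝ) ⬝ᵥ socMmat d ξ v *ᵥ Fin.cons u₀ (fun j => u j)
      = (1 / 2) * (u₀ ^ 2 + 2 * u₀ * ⟪v, u⟫_ℝ + (1 + ξ) * ‖u‖ ^ 2 - ξ * ⟪v, u⟫_ℝ ^ 2) := by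
  simp only [dotProduct, Fin.sum_univ_succ, Fin.cons_zero, Fin.cons_succ,
    socMmat_mulVec_cons_zero, socMmat_mulVec_cons_succ]
  have hsum : ∀ s : ℝ, ∑ i, u i * (1 / 2 * (v i * u₀ + (1 + ξ) * u i - ξ * v i * s))
      = 1 / 2 * ((u₀ - ξ * s) * ⟪v, u⟫_ℝ + (1 + ξ) * ‖u‖ ^ 2) := fun s => by
    simp only [EuclideanSpace.real_inner_eq_sum, EuclideanSpace.real_norm_sq_eq, Finset.mul_sum,
      ← Finset.sum_add_distrib]
    exact Finset.sum_congr rfl fun i _ => by ring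
  rw [hsum]
  ring

lemma cons_dotProduct_socMmat_mulVec_cons_of_inner_eq_neg {d : ℕ} (ξ : ℝ)
    {v u : EuclideanSpace ℝ (Fin d)} {u₀ : ℝ} (h : ⟪v, u⟫_ℝ = -u₀) :
    (Fin.cons u₀ (fun j => u j) : Fin (d + 1) → ℝ) ⬝ᵥ socMmat d ξ v *ᵥ Fin.cons u₀ (fun j => u j)
      = -(1 / 2) * (1 + ξ) * (u₀ ^ 2 - ‖u‖ ^ 2) := by
  rw [cons_dotProduct_socMmat_mulVec_cons, h]
  ring

theorem stmt_17_general {d : ℕ}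
    (w₀ : ℝ) (wbar : EuclideanSpace ℝ (Fin d)) (hwbar : wbar ≠ 0)
    (u₀ : ℝ) (ubar : EuclideanSpace ℝ (Fin d))
    (hu : ⟪wbar, ubar⟫_ℝ = ‖wbar‖ * u₀) :
    (Fin.cons u₀ (fun j => ubar j) : Fin (d + 1) → ℝ) ⬝ᵥ
        (socMmat d (-(w₀ / ‖wbar‖)) (-(‖wbar‖⁻¹ • wbar))).mulVec
          (Fin.cons u₀ fun j => ubar j)
      = -(1 / 2) * (1 - w₀ / ‖wbar‖) * (u₀ ^ 2 - ‖ubar‖ ^ 2) := by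
  have hinner : ⟪-(‖wbar‖⁻¹ • wbar), ubar⟫_ℝ = -u₀ := by
    rw [inner_neg_left, real_inner_smul_left, hu, inv_mul_cancel_left₀ (norm_ne_zero_iff.mpr hwbar)]
  rw [cons_dotProduct_socMmat_mulVec_cons_of_inner_eq_neg _ hinner, ← sub_eq_add_neg]

theorem stmt_17 {d : ℕ} (hd : 1 ≤ d)
    (w₀ : ℝ) (wbar : EuclideanSpace ℝ (Fin d)) (hwbar : wbar ≠ 0)
    (u₀ : ℝ) (ubar : EuclideanSpace ℝ (Fin d))
    (hu : ⟪wbar, ubar⟫_ℝ = ‖wbar‖ * u₀) :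
    (Fin.cons u₀ (fun j => ubar j) : Fin (d + 1) → ℝ) ⬝ᵥ
        (socMmat d (-(w₀ / ‖wbar‖)) (-(‖wbar‖⁻¹ • wbar))).mulVec
          (Fin.cons u₀ fun j => ubar j)
      = -(1 / 2) * (1 - w₀ / ‖wbar‖) * (u₀ ^ 2 - ‖ubar‖ ^ 2) :=
  stmt_17_general w₀ wbar hwbar u₀ ubar hu
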